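/- Let β = (1+√5)/2. The intervals I_{n,J} = [L_{n,J}, L_{n,J} + j_n β^{−n−1} + (1 − j_n) β^{−n}) for J = (j_1,...,j_n) ∈ Ω_n are pairwise disjoint and their union is [0,1). -/

import Mathlib

open MeasureTheory Real Filter

/-- The golden ratio. -/
noncomputable def gr : ℝ := (1 + Real.sqrt 5) / 2

/-- Binary strings of length `n` with no two consecutive ones. -/
def Omega (n : ℕ) : Finset (Fin n → Fin 2) :=
  Finset.univ.filter fun J =>
    ∀ k : Fin n, ∀ h : k.val + 1 < n, (J k : ℕ) * (J ⟨k.val + 1, h⟩ : ℕ) = 0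

/-- `L (j_1,…,j_n) = ∑ j_k β^{-k}`. -/
noncomputable def L {n : ℕ} (J : Fin n → Fin 2) : ℝ :=
  ∑ k : Fin n, ((J k : ℕ) : ℝ) * gr ^ (-(k.val + 1 : ℤ))

/-- The last digit `j_n` of a string. -/
def lastD {n : ℕ} (J : Fin n → Fin 2) : ℕ :=
  if h : 0 < n then (J ⟨n - 1, Nat.sub_lt h one_pos⟩ : ℕ) else 0

/-- The length of `I_{n,J}`. -/
noncomputable def Ilen {n : ℕ} (J : Fin n → Fin 2) : ℝ :=
  (lastD J : ℝ) * gr ^ (-(n + 1 : ℤ)) + (1 - (lastD J : ℝ)) * gr ^ (-(n : ℤ))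

/-- The interval `I_{n,J}`. -/
noncomputable def Ival {n : ℕ} (J : Fin n → Fin 2) : Set ℝ :=
  Set.Ico (L J) (L J + Ilen J)

/-- The base-β transformation (β = golden ratio). -/
noncomputable def T (x : ℝ) : ℝ := gr * x - ⌊gr * x⌋

/-- The invariant density. -/
noncomputable def fGold (x : ℝ) : ℝ :=
  if x < gr⁻¹ then (1 + gr) / Real.sqrt 5 else gr / Real.sqrt 5

/-- The pdf of `T^n X` when `X` has pdf `f`. -/
noncomputable def evolve (n : ℕ) (f : ℝ → ℝ) (x : ℝ) : ℝ :=
  if x < gr⁻¹ then ∑ J ∈ Omega n, gr ^ (-(n : ℤ)) * f (L J + x * gr ^ (-(n : ℤ)))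
  else ∑ J ∈ (Omega n).filter (fun J => lastD J = 0),
    gr ^ (-(n : ℤ)) * f (L J + x * gr ^ (-(n : ℤ)))

/-!
Appending an admissible digit to `J ∈ Ω_n` splits `I_{n,J}`. If `j_n = 0`, then
`I_{n,J} = [L, L + β^{-n})` is cut at `L + β^{-n-1}` into `I_{n+1,J0}` and `I_{n+1,J1}`, since
`β^{-n} = β^{-n-1} + β^{-n-2}` by `β² = β + 1`; if `j_n = 1`, only `J0` is admissible and
`I_{n+1,J0} = I_{n,J}`. Induction on `n`, starting from `I_{0,∅} = [0, 1)`, gives the partition.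
-/

open Set

lemma gr_eq_goldenRatio : gr = goldenRatio := rfl

lemma gr_zpow_add_two (m : ℤ) : gr ^ (m + 2) = gr ^ (m + 1) + gr ^ m := by
  rw [gr_eq_goldenRatio, zpow_add₀ goldenRatio_ne_zero, zpow_add_one₀ goldenRatio_ne_zero]
  norm_num [goldenRatio_sq]
  ring

lemma mem_Omega_succ_iff {n : ℕ} (J : Fin (n + 1) → Fin 2) :
    J ∈ Omega (n + 1) ↔ ∀ k : Fin n, (J k.castSucc : ℕ) * (J k.succ : ℕ) = 0 := by
  simp only [Omega, Finset.mem_filter, Finset.mem_univ, true_and]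
  exact ⟨fun H k => H k.castSucc (by simp), fun H k hk => H ⟨k, by omega⟩⟩

lemma lastD_succ {n : ℕ} (J : Fin (n + 1) → Fin 2) : lastD J = J (Fin.last n) := by
  simp [lastD, Fin.last]

lemma lastD_eq_zero_or_eq_one {n : ℕ} (J : Fin n → Fin 2) : lastD J = 0 ∨ lastD J = 1 := by
  unfold lastD
  split <;> omega

lemma lastD_snoc {n : ℕ} (J : Fin n → Fin 2) (d : Fin 2) :
    lastD (Fin.snoc J d : Fin (n + 1) → Fin 2) = d := by
  rw [lastD_succ, Fin.snoc_last]

lemma snoc_mem_Omega_iff {n : ℕ} (J : Fin n → Fin 2) (d : Fin 2) :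
    (Fin.snoc J d : Fin (n + 1) → Fin 2) ∈ Omega (n + 1) ↔
      J ∈ Omega n ∧ lastD J * (d : ℕ) = 0 := by
  cases n with
  | zero =>
    rw [mem_Omega_succ_iff]
    exact iff_of_true finZeroElim
      ⟨Finset.mem_filter.2 ⟨Finset.mem_univ _, finZeroElim⟩, by simp [lastD]⟩
  | succ m =>
    rw [mem_Omega_succ_iff, mem_Omega_succ_iff, Fin.forall_fin_succ', lastD_succ]
    simp only [Fin.succ_castSucc, Fin.snoc_castSucc, Fin.succ_last, Fin.snoc_last]

lemma L_snoc {n : ℕ} (J : Fin n → Fin 2) (d : Fin 2) :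
    L (Fin.snoc J d : Fin (n + 1) → Fin 2) = L J + (d : ℕ) * gr ^ (-(n + 1 : ℤ)) := by
  simp [L, Fin.sum_univ_castSucc]

lemma Ival_of_lastD_eq_zero {n : ℕ} {J : Fin n → Fin 2} (h : lastD J = 0) :
    Ival J = Ico (L J) (L J + gr ^ (-n : ℤ)) := by
  simp [Ival, Ilen, h]

lemma Ival_of_lastD_eq_one {n : ℕ} {J : Fin n → Fin 2} (h : lastD J = 1) :
    Ival J = Ico (L J) (L J + gr ^ (-(n + 1) : ℤ)) := by
  simp [Ival, Ilen, h]

lemma Ival_snoc_zero {n : ℕ} (J : Fin n → Fin 2) :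
    Ival (Fin.snoc J 0 : Fin (n + 1) → Fin 2) = Ico (L J) (L J + gr ^ (-(n + 1) : ℤ)) := by
  rw [Ival_of_lastD_eq_zero (lastD_snoc J 0), L_snoc]
  simp

lemma Ival_snoc_one {n : ℕ} (J : Fin n → Fin 2) :
    Ival (Fin.snoc J 1 : Fin (n + 1) → Fin 2) =
      Ico (L J + gr ^ (-(n + 1) : ℤ)) (L J + gr ^ (-n : ℤ)) := by
  have h : gr ^ (-n : ℤ) = gr ^ (-(n + 1) : ℤ) + gr ^ (-(n + 1 + 1) : ℤ) := by
    have := gr_zpow_add_two (-(n + 2))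
    ring_nf at this ⊢
    linarith
  rw [Ival_of_lastD_eq_one (lastD_snoc J 1), L_snoc]
  push_cast
  rw [Fin.val_one, Nat.cast_one, one_mul, add_assoc, h]

lemma Ival_of_fin_zero (J : Fin 0 → Fin 2) : Ival J = Ico 0 1 := by
  simp [Ival_of_lastD_eq_zero (show lastD J = 0 from rfl), L]

def extensions {n : ℕ} (J : Fin n → Fin 2) : Set (Fin (n + 1) → Fin 2) :=
  {J' | ∃ d : Fin 2, lastD J * (d : ℕ) = 0 ∧ Fin.snoc J d = J'}

lemma extensions_of_lastD_eq_zero {n : ℕ} {J : Fin n → Fin 2} (h : lastD J = 0) :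
    extensions J = {Fin.snoc J 0, Fin.snoc J 1} := by
  ext J'
  simp [extensions, h, eq_comm]

lemma extensions_of_lastD_eq_one {n : ℕ} {J : Fin n → Fin 2} (h : lastD J = 1) :
    extensions J = {Fin.snoc J 0} := by
  ext J'
  simp [extensions, h, eq_comm]

lemma coe_Omega_succ (n : ℕ) :
    (Omega (n + 1) : Set (Fin (n + 1) → Fin 2)) = ⋃ J ∈ Omega n, extensions J := by
  ext J'
  simp only [Finset.mem_coe, mem_iUnion, extensions, mem_ofPred_eq, exists_prop]
  constructor
  · intro h
    rw [← Fin.snoc_init_self J'] at h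
    obtain ⟨hJ, hd⟩ := (snoc_mem_Omega_iff _ _).1 h
    exact ⟨_, hJ, _, hd, Fin.snoc_init_self J'⟩
  · rintro ⟨J, hJ, d, hd, rfl⟩
    exact (snoc_mem_Omega_iff J d).2 ⟨hJ, hd⟩

lemma biUnion_extensions_Ival {n : ℕ} (J : Fin n → Fin 2) :
    ⋃ J' ∈ extensions J, Ival J' = Ival J := by
  rcases lastD_eq_zero_or_eq_one J with h | h
  · have hpos : 0 < gr ^ (-(n + 1) : ℤ) := zpow_pos goldenRatio_pos _
    have hle : gr ^ (-(n + 1) : ℤ) ≤ gr ^ (-n : ℤ) :=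
      zpow_le_zpow_right₀ one_lt_goldenRatio.le (by omega)
    rw [extensions_of_lastD_eq_zero h, biUnion_pair, Ival_snoc_zero, Ival_snoc_one,
      Ico_union_Ico_eq_Ico (by linarith) (by linarith), Ival_of_lastD_eq_zero h]
  · rw [extensions_of_lastD_eq_one h, biUnion_singleton, Ival_snoc_zero, Ival_of_lastD_eq_one h]

lemma pairwiseDisjoint_extensions_Ival {n : ℕ} (J : Fin n → Fin 2) :
    (extensions J).PairwiseDisjoint Ival := by
  rcases lastD_eq_zero_or_eq_one J with h | h
  · rw [extensions_of_lastD_eq_zero h]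
    refine (pairwiseDisjoint_singleton _ _).insert fun J' hJ' _ => ?_
    rw [mem_singleton_iff.1 hJ', Ival_snoc_zero, Ival_snoc_one]
    exact Ico_disjoint_Ico_same
  · rw [extensions_of_lastD_eq_one h]
    exact pairwiseDisjoint_singleton _ _

theorem Ival_partition_general (n : ℕ) :
    ((Omega n : Set (Fin n → Fin 2)).PairwiseDisjoint fun J => Ival J) ∧
    (⋃ J ∈ Omega n, Ival J) = Set.Ico (0 : ℝ) 1 := by
  induction n with
  | zero =>
    refine ⟨subsingleton_of_subsingleton.pairwise _, ?_⟩
    simp [Ival_of_fin_zero, Omega]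
  | succ n ih =>
    rw [← Finset.set_biUnion_coe, coe_Omega_succ]
    refine ⟨PairwiseDisjoint.biUnion ?_ fun J _ => pairwiseDisjoint_extensions_Ival J, ?_⟩
    · exact ih.1.mono_on fun J _ => (biUnion_extensions_Ival J).le
    · simpa only [biUnion_iUnion, biUnion_extensions_Ival] using ih.2

theorem Ival_partition (n : ℕ) (hn : 0 < n) :
    ((Omega n : Set (Fin n → Fin 2)).PairwiseDisjoint fun J => Ival J) ∧
    (⋃ J ∈ Omega n, Ival J) = Set.Ico (0 : ℝ) 1 :=
  Ival_partition_general n
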